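/- For s ≥ 4, the graph G in 𝒢₁(1, 1, ..., 1) (all b_i = 1) satisfies κ(G) = δ(G) ≥ 3 but is not Hamiltonian connected: removing the cut set S = {y, x, x₁, ..., x_{s−1}} of size s + 1 leaves s + 1 isolated components a₀, a₁, ..., a_s, so ω(G − S) = |S|. -/

import Mathlib

open SimpleGraph Finset

variable {V : Type*}

/-- The graph `G` with the extra edge `uv` added. -/
def SimpleGraph.addEdge (G : SimpleGraph V) (u v : V) : SimpleGraph V :=
  G ⊔ SimpleGraph.fromEdgeSet {s(u, v)}

/-- `D` is a connected dominating set of `G`. -/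
def SimpleGraph.IsCDS (G : SimpleGraph V) (D : Set V) : Prop :=
  (∀ v : V, v ∈ D ∨ ∃ u ∈ D, G.Adj u v) ∧ (G.induce D).Connected

/-- The connected domination number. -/
noncomputable def SimpleGraph.cdn [Fintype V] (G : SimpleGraph V) : ℕ :=
  sInf {n | ∃ D : Finset V, D.card = n ∧ G.IsCDS ↑D}

/-- `G` is a `3`-`γ_c`-critical graph. -/
def SimpleGraph.IsCritical3 [Fintype V] (G : SimpleGraph V) : Prop :=
  G.Connected ∧ G.cdn = 3 ∧
    ∀ u v : V, u ≠ v → ¬G.Adj u v → (G.addEdge u v).cdn < 3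

/-- `s` is an independent set of `G`. -/
def SimpleGraph.IsIndepSet' (G : SimpleGraph V) (s : Set V) : Prop :=
  s.Pairwise (fun a b => ¬G.Adj a b)

/-- The independence number. -/
noncomputable def SimpleGraph.indepNum' [Fintype V] (G : SimpleGraph V) : ℕ :=
  sSup {n | ∃ s : Finset V, G.IsIndepSet' ↑s ∧ s.card = n}

/-- `S` is a vertex cut: removing it leaves a non-connected graph. -/
def SimpleGraph.IsVertexCut [Fintype V] (G : SimpleGraph V) (S : Finset V) : Prop :=
  ¬(G.induce ((↑S : Set V)ᶜ)).Connected

/-- The vertex connectivity: minimum size of a vertex cut. -/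
noncomputable def SimpleGraph.conn [Fintype V] (G : SimpleGraph V) : ℕ :=
  sInf {n | ∃ S : Finset V, S.card = n ∧ G.IsVertexCut S}

/-- One-sided description of the edges in the family `𝒢₁(b₀, …, b_{s-1})`.
`A i` (for `0 ≤ i ≤ s`) are the vertices `aᵢ`, `B j` (for `0 ≤ j ≤ s-1`) the sets `Bⱼ`,
`x` the special vertex, and `bb` the fixed vertex `b ∈ B₀`. -/
def G1Half {V : Type*} (s : ℕ) (A : ℕ → V) (B : ℕ → Finset V) (x bb : V) (p q : V) : Prop :=
  (p = A 0 ∧ (q = x ∨ ∃ j < s, q ∈ B j)) ∨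
  (∃ i, 1 ≤ i ∧ i ≤ s - 1 ∧ p = A i ∧ (q = x ∨ ∃ j < s, j ≠ i ∧ q ∈ B j)) ∨
  (p = A s ∧ ∃ j, 1 ≤ j ∧ j ≤ s - 1 ∧ q ∈ B j) ∨
  (p = x ∧ q ≠ bb ∧ q ≠ x ∧ q ≠ A s) ∨
  ((∃ j, 1 ≤ j ∧ j ≤ s - 1 ∧ p ∈ B j) ∧ (∃ k, 1 ≤ k ∧ k ≤ s - 1 ∧ q ∈ B k)) ∨
  (p ∈ B 0 ∧ q ∈ B 0)

/-- `G` is the graph in the family `𝒢₁(b₀, …, b_{s-1})` built from the given data. -/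
def SimpleGraph.G1Witness {V : Type*} (G : SimpleGraph V)
    (s : ℕ) (A : ℕ → V) (B : ℕ → Finset V) (x bb : V) : Prop :=
  2 ≤ s ∧
  (∀ i ≤ s, ∀ j ≤ s, A i = A j → i = j) ∧
  (∀ j < s, (B j).Nonempty) ∧
  (∀ i < s, ∀ j < s, i ≠ j → Disjoint (B i) (B j)) ∧
  (∀ i ≤ s, ∀ j < s, A i ∉ B j) ∧
  (∀ j < s, x ∉ B j) ∧ (∀ i ≤ s, x ≠ A i) ∧
  bb ∈ B 0 ∧
  (∀ z : V, (∃ i ≤ s, z = A i) ∨ (∃ j < s, z ∈ B j) ∨ z = x) ∧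
  ∀ p q : V, G.Adj p q ↔ p ≠ q ∧ (G1Half s A B x bb p q ∨ G1Half s A B x bb q p)

/-- `G` is Hamiltonian connected: every two vertices are joined by a Hamiltonian path. -/
def SimpleGraph.HamiltonianConnected {V : Type*} [DecidableEq V] (G : SimpleGraph V) : Prop :=
  ∀ u v : V, u ≠ v → ∃ p : G.Walk u v, p.IsHamiltonian


/-!
With `Bⱼ = {bⱼ}`, the vertices `a₀, …, a_s` are pairwise non-adjacent and everything else is the
cut set `S = {x, b₀, …, b_{s-1}}`, so `G` has `2s + 2` vertices and `G - S` is edgeless.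

Connectivity: `a_s` has exactly the `s - 1` neighbours `b₁, …, b_{s-1}`, so `κ ≤ δ ≤ s - 1`.
Conversely each `bⱼ` with `1 ≤ j ≤ s - 1` is a hub: every other vertex is adjacent to it or has
`s - 1` common neighbours with it. Deleting fewer than `s - 1` vertices spares one hub together
with, for every remaining vertex, a path of length at most two to it.

Hamiltonicity: along a path no two consecutive vertices lie in an independent set, so a
Hamiltonian `x`–`b₀` path, whose ends avoid the `aᵢ`, can visit at most `s` of the `s + 1`
vertices `aᵢ`.
-/

namespace SimpleGraph

variable {G : SimpleGraph V}

theorem IsIndepSet.induce_eq_bot {s : Set V} (hs : G.IsIndepSet s) : G.induce s = ⊥ := by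
  ext u v
  simp only [bot_adj, iff_false]
  exact fun huv => hs u.2 v.2 (fun e => huv.ne (Subtype.ext e)) huv

theorem card_connectedComponent_bot :
    Nat.card (⊥ : SimpleGraph V).ConnectedComponent = Nat.card V :=
  (Nat.card_eq_of_bijective _
    ⟨fun _ _ huv => reachable_bot.1 (ConnectedComponent.exact huv),
      fun c => c.exists_rep⟩).symm

theorem IsIndepSet.card_connectedComponent_induce {s : Set V} (hs : G.IsIndepSet s) :
    Nat.card (G.induce s).ConnectedComponent = s.ncard := by
  rw [hs.induce_eq_bot, card_connectedComponent_bot, Nat.card_coe_set_eq]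

theorem Walk.two_mul_countP_support_lt_length [DecidableEq V] {u v : V} {I : Finset V}
    (hI : G.IsIndepSet I) (p : G.Walk u v) (hu : u ∉ I) (hv : v ∉ I) :
    2 * p.support.countP (fun w => w ∈ I) < p.support.length := by
  -- the weaker bound for walks starting in `I` is what the induction step needs
  suffices (u ∉ I → 2 * p.support.countP (fun w => w ∈ I) < p.support.length) ∧
      2 * p.support.countP (fun w => w ∈ I) ≤ p.support.length from this.1 hu
  clear hu
  induction p with
  | nil => simp [hv]
  | @cons u w _ huw p ih =>
    obtain ⟨ih_notMem, ih⟩ := ih hv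
    by_cases huI : u ∈ I
    · have hwI : w ∉ I := fun hwI => hI huI hwI huw.ne huw
      have := ih_notMem hwI
      refine ⟨absurd huI, ?_⟩
      simp only [Walk.support_cons, List.countP_cons, List.length_cons, huI, decide_true,
        ↓reduceIte]
      omega
    · refine ⟨fun _ => ?_, ?_⟩ <;>
      simp only [Walk.support_cons, List.countP_cons, List.length_cons, huI, decide_false,
        Bool.false_eq_true, ↓reduceIte] <;>
      omega

theorem Reachable.induce_compl_of_common_neighbors {T C : Finset V} {z h : V}
    (hC : ∀ w ∈ C, G.Adj z w ∧ G.Adj w h) (hTC : #T < #C) (hz : z ∉ T) (hh : h ∉ T) :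
    (G.induce (↑T)ᶜ).Reachable ⟨z, hz⟩ ⟨h, hh⟩ := by
  obtain ⟨w, hwC, hwT⟩ := exists_mem_notMem_of_card_lt_card hTC
  have hzw : (G.induce (↑T)ᶜ).Adj ⟨z, hz⟩ ⟨w, hwT⟩ := (hC w hwC).1
  have hwh : (G.induce (↑T)ᶜ).Adj ⟨w, hwT⟩ ⟨h, hh⟩ := (hC w hwC).2
  exact hzw.reachable.trans hwh.reachable

section Fintype

variable [Fintype V]

theorem Walk.IsHamiltonian.two_mul_card_lt [DecidableEq V] {u v : V} {p : G.Walk u v}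
    (hp : p.IsHamiltonian) {I : Finset V} (hI : G.IsIndepSet I) (hu : u ∉ I) (hv : v ∉ I) :
    2 * #I < Fintype.card V := by
  have hcount : p.support.countP (fun w => w ∈ I) = #I := by
    rw [List.countP_eq_length_filter, ← List.toFinset_card_of_nodup
      (hp.isPath.support_nodup.filter _), List.toFinset_filter, hp.toFinset_support]
    simp
  rw [← hcount, ← hp.length_support]
  exact p.two_mul_countP_support_lt_length hI hu hv

theorem not_hamiltonianConnected_of_isIndepSet [DecidableEq V] {I : Finset V}
    (hI : G.IsIndepSet I) {u v : V} (huv : u ≠ v) (hu : u ∉ I) (hv : v ∉ I)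
    (hcard : Fintype.card V ≤ 2 * #I) : ¬G.HamiltonianConnected := fun hG => by
  obtain ⟨p, hp⟩ := hG u v huv
  exact (hp.two_mul_card_lt hI hu hv).not_ge hcard

theorem isVertexCut_of_isIndepSet_compl {S : Finset V} (hS : G.IsIndepSet (↑S)ᶜ)
    (hnt : ((↑S)ᶜ : Set V).Nontrivial) : G.IsVertexCut S := by
  have : Nontrivial ((↑S)ᶜ : Set V) := hnt.coe_sort
  rw [IsVertexCut, hS.induce_eq_bot]
  exact not_connected_bot

theorem isVertexCut_univ : G.IsVertexCut univ := fun h => by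
  obtain ⟨⟨v, hv⟩⟩ := h.nonempty
  simp at hv

theorem conn_le_degree [DecidableRel G.Adj] {v w : V} (hvw : v ≠ w) (hadj : ¬G.Adj v w) :
    G.conn ≤ G.degree v := by
  refine Nat.sInf_le ⟨G.neighborFinset v, rfl, fun hconn => ?_⟩
  have hv : v ∈ ((↑(G.neighborFinset v) : Set V)ᶜ) := by simp
  have hw : w ∈ ((↑(G.neighborFinset v) : Set V)ᶜ) := by simpa using hadj
  obtain ⟨p⟩ := hconn.preconnected ⟨v, hv⟩ ⟨w, hw⟩
  cases p with
  | nil => exact hvw rfl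
  | @cons _ y _ hadj' _ => exact y.2 (by simpa using hadj')

theorem conn_le_minDegree [DecidableRel G.Adj] {v w : V} (hvw : v ≠ w) (hadj : ¬G.Adj v w) :
    G.conn ≤ G.minDegree := by
  have : Nonempty V := ⟨v⟩
  obtain ⟨u, hu⟩ := G.exists_minimal_degree_vertex
  by_cases hnonadj : ∃ w, w ≠ u ∧ ¬G.Adj u w
  · obtain ⟨w', hw'u, hadj'⟩ := hnonadj
    exact hu ▸ conn_le_degree hw'u.symm hadj'
  classical
  have hdeg_u : G.degree u = Fintype.card V - 1 := by
    rw [← card_neighborFinset_eq_degree, ← card_univ, ← card_erase_of_mem (mem_univ u)]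
    congr 1
    ext w
    simpa using ⟨fun h => h.ne.symm, fun hwu => not_not.1 fun h => hnonadj ⟨w, hwu, h⟩⟩
  have hdeg_v : G.degree v < Fintype.card V - 1 := by
    rw [← card_neighborFinset_eq_degree, ← card_univ, ← card_erase_of_mem (mem_univ v)]
    refine card_lt_card ⟨fun w hw => ?_, fun h => ?_⟩
    · simpa using ((G.mem_neighborFinset v w).1 hw).ne.symm
    · exact hadj ((G.mem_neighborFinset v w).1 (h (by simpa using hvw.symm)))
  have := G.minDegree_le_degree v
  omega

theorem le_conn_of_hubs {k : ℕ} (H : Finset V) (hH : k ≤ #H)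
    (hub : ∀ h ∈ H, ∀ z, z ≠ h → ¬G.Adj z h →
      ∃ C : Finset V, k ≤ #C ∧ ∀ w ∈ C, G.Adj z w ∧ G.Adj w h) :
    k ≤ G.conn := by
  refine le_csInf ⟨_, univ, rfl, isVertexCut_univ⟩ ?_
  rintro _ ⟨T, rfl, hcut⟩
  by_contra! hT
  obtain ⟨h, hhH, hhT⟩ := exists_mem_notMem_of_card_lt_card (hT.trans_le hH)
  have hreach : ∀ z : ((↑T : Set V)ᶜ : Set V), (G.induce (↑T)ᶜ).Reachable z ⟨h, hhT⟩ := by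
    rintro ⟨z, hz⟩
    by_cases hzh : z = h
    · subst hzh; rfl
    by_cases hadj : G.Adj z h
    · exact Adj.reachable (G := G.induce (↑T)ᶜ) (u := ⟨z, hz⟩) (v := ⟨h, hhT⟩) hadj
    obtain ⟨C, hC, hCadj⟩ := hub h hhH z hzh hadj
    exact Reachable.induce_compl_of_common_neighbors hCadj (hT.trans_le hC) hz hhT
  exact hcut ((connected_iff_exists_forall_reachable _).2 ⟨_, fun z => (hreach z).symm⟩)

end Fintype

namespace G1Witness

variable {s : ℕ} {A : ℕ → V} {B : ℕ → Finset V} {x bb : V} (h : G.G1Witness s A B x bb)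
include h

theorem two_le : 2 ≤ s := h.1

theorem A_injOn : Set.InjOn A (Set.Iic s) := fun i hi k hk => h.2.1 i hi k hk

theorem disjoint_B {j k : ℕ} (hj : j < s) (hk : k < s) (hjk : j ≠ k) : Disjoint (B j) (B k) :=
  h.2.2.2.1 j hj k hk hjk

theorem A_notMem_B {i j : ℕ} (hi : i ≤ s) (hj : j < s) : A i ∉ B j := h.2.2.2.2.1 i hi j hj

theorem x_notMem_B {j : ℕ} (hj : j < s) : x ∉ B j := h.2.2.2.2.2.1 j hj

theorem A_ne_x {i : ℕ} (hi : i ≤ s) : A i ≠ x := (h.2.2.2.2.2.2.1 i hi).symm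

theorem bb_mem_B_zero : bb ∈ B 0 := h.2.2.2.2.2.2.2.1

theorem eq_A_or_mem_B_or_eq_x (z : V) : (∃ i ≤ s, z = A i) ∨ (∃ j < s, z ∈ B j) ∨ z = x :=
  h.2.2.2.2.2.2.2.2.1 z

theorem adj_iff (p q : V) :
    G.Adj p q ↔ p ≠ q ∧ (G1Half s A B x bb p q ∨ G1Half s A B x bb q p) :=
  h.2.2.2.2.2.2.2.2.2 p q

theorem adj_of_g1Half {p q : V} (hpq : p ≠ q) (hh : G1Half s A B x bb p q) : G.Adj p q :=
  (h.adj_iff p q).2 ⟨hpq, .inl hh⟩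

theorem A_ne_A {i k : ℕ} (hi : i ≤ s) (hk : k ≤ s) (hik : i ≠ k) : A i ≠ A k :=
  fun e => hik (h.A_injOn hi hk e)

theorem ne_of_mem_B {j k : ℕ} (hj : j < s) (hk : k < s) (hjk : j ≠ k) {v w : V}
    (hv : v ∈ B j) (hw : w ∈ B k) : v ≠ w := by
  rintro rfl
  exact Finset.disjoint_left.1 (h.disjoint_B hj hk hjk) hv hw

theorem adj_A_of_mem_B {i j : ℕ} (hi : i ≤ s) (hj : 1 ≤ j) (hjs : j ≤ s - 1) (hij : i ≠ j)
    {v : V} (hv : v ∈ B j) : G.Adj (A i) v := by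
  refine h.adj_of_g1Half (fun e => h.A_notMem_B hi (by omega) (e ▸ hv)) ?_
  unfold G1Half
  rcases Nat.eq_zero_or_pos i with rfl | hi0
  · exact .inl ⟨rfl, .inr ⟨j, by omega, hv⟩⟩
  rcases hi.lt_or_eq with his | rfl
  · exact .inr (.inl ⟨i, hi0, by omega, rfl, .inr ⟨j, by omega, hij.symm, hv⟩⟩)
  · exact .inr (.inr (.inl ⟨rfl, j, hj, hjs, hv⟩))

theorem adj_A_of_mem_B_zero {i : ℕ} (hi : i < s) {v : V} (hv : v ∈ B 0) : G.Adj (A i) v := by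
  refine h.adj_of_g1Half (fun e => h.A_notMem_B hi.le (by omega) (e ▸ hv)) ?_
  rcases Nat.eq_zero_or_pos i with rfl | hi0
  · exact .inl ⟨rfl, .inr ⟨0, hi, hv⟩⟩
  · exact .inr (.inl ⟨i, hi0, by omega, rfl, .inr ⟨0, by omega, by omega, hv⟩⟩)

theorem adj_A_x {i : ℕ} (hi : i < s) : G.Adj (A i) x := by
  refine h.adj_of_g1Half (h.A_ne_x hi.le) ?_
  rcases Nat.eq_zero_or_pos i with rfl | hi0
  · exact .inl ⟨rfl, .inl rfl⟩
  · exact .inr (.inl ⟨i, hi0, by omega, rfl, .inl rfl⟩)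

theorem adj_x_of_mem_B {j : ℕ} (hj : 1 ≤ j) (hjs : j ≤ s - 1) {v : V} (hv : v ∈ B j) :
    G.Adj x v := by
  have hs : j < s := by omega
  refine h.adj_of_g1Half (fun e => h.x_notMem_B hs (e ▸ hv)) ?_
  exact .inr (.inr (.inr (.inl ⟨rfl, h.ne_of_mem_B hs (by omega) (by omega) hv h.bb_mem_B_zero,
    fun e => h.x_notMem_B hs (e ▸ hv), fun e => h.A_notMem_B le_rfl hs (e ▸ hv)⟩)))

theorem adj_of_mem_B_of_mem_B {j k : ℕ} (hj : 1 ≤ j) (hjs : j ≤ s - 1) (hk : 1 ≤ k)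
    (hks : k ≤ s - 1) (hjk : j ≠ k) {v w : V} (hv : v ∈ B j) (hw : w ∈ B k) : G.Adj v w :=
  h.adj_of_g1Half (h.ne_of_mem_B (by omega) (by omega) hjk hv hw)
    (.inr (.inr (.inr (.inr (.inl ⟨⟨j, hj, hjs, hv⟩, k, hk, hks, hw⟩)))))

theorem not_adj_A_A {i k : ℕ} (hi : i ≤ s) (hk : k ≤ s) : ¬G.Adj (A i) (A k) := by
  have not_half : ∀ i ≤ s, ∀ k ≤ s, ¬G1Half s A B x bb (A i) (A k) := by
    intro i hi k hk hh
    have := h.two_le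
    have := h.A_ne_x hi
    have := h.A_ne_x hk
    have := fun j (hj : j < s) => h.A_notMem_B hi hj
    have := fun j (hj : j < s) => h.A_notMem_B hk hj
    unfold G1Half at hh
    grind
  intro hadj
  rcases ((h.adj_iff _ _).1 hadj).2 with hh | hh
  exacts [not_half i hi k hk hh, not_half k hk i hi hh]

theorem mem_B_of_adj_A_s {v : V} (hadj : G.Adj (A s) v) :
    ∃ j, 1 ≤ j ∧ j ≤ s - 1 ∧ v ∈ B j := by
  have := h.two_le
  have := h.A_ne_x le_rfl
  have := fun j (hj : j < s) => h.A_notMem_B le_rfl hj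
  have := fun i (hi : i < s) => h.A_ne_A le_rfl hi.le hi.ne'
  rcases ((h.adj_iff _ _).1 hadj).2 with hh | hh <;> unfold G1Half at hh <;> grind

variable [DecidableEq V]

theorem isIndepSet_image_A : G.IsIndepSet ↑((range (s + 1)).image A) := by
  rintro _ hv _ hw -
  obtain ⟨i, hi, rfl⟩ := mem_image.1 hv
  obtain ⟨k, hk, rfl⟩ := mem_image.1 hw
  exact h.not_adj_A_A (Nat.lt_succ_iff.1 (mem_range.1 hi)) (Nat.lt_succ_iff.1 (mem_range.1 hk))

theorem card_image_A {I : Finset ℕ} (hI : ∀ i ∈ I, i ≤ s) : #(I.image A) = #I :=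
  card_image_of_injOn fun i hi k hk => h.A_injOn (hI i hi) (hI k hk)

theorem card_image_A_range : #((range (s + 1)).image A) = s + 1 := by
  rw [h.card_image_A fun i hi => by grind, card_range]

theorem card_biUnion_B (hb : ∀ j < s, #(B j) = 1) {J : Finset ℕ} (hJ : ∀ j ∈ J, j < s) :
    #(J.biUnion B) = #J := by
  rw [card_biUnion fun i hi j hj hij => h.disjoint_B (hJ i hi) (hJ j hj) hij,
    sum_congr rfl fun j hj => hb j (hJ j hj), sum_const, smul_eq_mul, mul_one]

theorem card_cut (hb : ∀ j < s, #(B j) = 1) : #(insert x ((range s).biUnion B)) = s + 1 := by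
  rw [card_insert_of_notMem fun hx => by grind [h.x_notMem_B],
    h.card_biUnion_B hb fun j hj => by grind, card_range]

theorem exists_common_neighbors (hb : ∀ j < s, #(B j) = 1) {j : ℕ} (hj : 1 ≤ j)
    (hjs : j ≤ s - 1) {v : V} (hv : v ∈ B j) (z : V) (hzv : z ≠ v) (hadj : ¬G.Adj z v) :
    ∃ C : Finset V, s - 1 ≤ #C ∧ ∀ w ∈ C, G.Adj z w ∧ G.Adj w v := by
  rcases h.eq_A_or_mem_B_or_eq_x z with ⟨i, hi, rfl⟩ | ⟨k, hk, hzk⟩ | rfl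
  · obtain rfl : i = j := by_contra fun hij => hadj (h.adj_A_of_mem_B hi hj hjs hij hv)
    have hx : x ∉ ((Icc 1 (s - 1)).erase i).biUnion B := by
      simp only [mem_biUnion, not_exists, not_and]
      exact fun k hk => h.x_notMem_B (by grind)
    refine ⟨insert x (((Icc 1 (s - 1)).erase i).biUnion B), ?_, ?_⟩
    · rw [card_insert_of_notMem hx, h.card_biUnion_B hb fun k hk => by grind,
        card_erase_of_mem (by grind), Nat.card_Icc]
      omega
    · simp only [mem_insert, mem_biUnion, mem_erase, mem_Icc]
      rintro w (rfl | ⟨k, ⟨hki, hk, hks⟩, hwk⟩)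
      · exact ⟨h.adj_A_x (by omega), h.adj_x_of_mem_B hj hjs hv⟩
      · exact ⟨h.adj_A_of_mem_B hi hk hks hki.symm hwk,
          h.adj_of_mem_B_of_mem_B hk hks hj hjs hki hwk hv⟩
  · rcases Nat.eq_zero_or_pos k with rfl | hk0
    · refine ⟨((range s).erase j).image A, ?_, ?_⟩
      · rw [h.card_image_A fun i hi => by grind, card_erase_of_mem (by grind), card_range]
      · simp only [mem_image, mem_erase, mem_range]
        rintro _ ⟨i, ⟨hij, hi⟩, rfl⟩
        exact ⟨(h.adj_A_of_mem_B_zero hi hzk).symm, h.adj_A_of_mem_B hi.le hj hjs hij hv⟩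
    by_cases hkj : k = j
    · subst hkj
      exact (hzv (card_le_one.1 (hb k hk).le z hzk v hv)).elim
    · exact (hadj (h.adj_of_mem_B_of_mem_B hk0 (by omega) hj hjs hkj hzk hv)).elim
  · exact (hadj (h.adj_x_of_mem_B hj hjs hv)).elim

variable [Fintype V]

theorem compl_cut : (insert x ((range s).biUnion B))ᶜ = (range (s + 1)).image A := by
  ext z
  simp only [mem_compl, mem_insert, mem_biUnion, mem_range, mem_image, not_or, not_exists,
    not_and, Nat.lt_succ_iff]
  constructor
  · rintro ⟨hzx, hzB⟩
    rcases h.eq_A_or_mem_B_or_eq_x z with ⟨i, hi, rfl⟩ | ⟨j, hj, hzj⟩ | rfl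
    exacts [⟨i, hi, rfl⟩, (hzB j hj hzj).elim, (hzx rfl).elim]
  · rintro ⟨i, hi, rfl⟩
    exact ⟨h.A_ne_x hi, fun j hj => h.A_notMem_B hi hj⟩

theorem coe_compl_cut :
    (↑(insert x ((range s).biUnion B)) : Set V)ᶜ = ↑((range (s + 1)).image A) := by
  rw [← coe_compl, h.compl_cut]

theorem isIndepSet_compl_cut : G.IsIndepSet (↑(insert x ((range s).biUnion B)) : Set V)ᶜ :=
  h.coe_compl_cut ▸ h.isIndepSet_image_A

theorem isVertexCut_cut : G.IsVertexCut (insert x ((range s).biUnion B)) := by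
  refine isVertexCut_of_isIndepSet_compl h.isIndepSet_compl_cut ?_
  have hs := h.two_le
  rw [h.coe_compl_cut]
  exact ⟨A 0, mem_image_of_mem A (by simp), A 1, mem_image_of_mem A (by simp; omega),
    h.A_ne_A (by omega) (by omega) (by omega)⟩

theorem degree_A_s_le [DecidableRel G.Adj] (hb : ∀ j < s, #(B j) = 1) :
    G.degree (A s) ≤ s - 1 := by
  have hsub : G.neighborFinset (A s) ⊆ (Icc 1 (s - 1)).biUnion B := fun v hv => by
    obtain ⟨j, hj, hjs, hvj⟩ := h.mem_B_of_adj_A_s ((G.mem_neighborFinset _ _).1 hv)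
    exact mem_biUnion.2 ⟨j, mem_Icc.2 ⟨hj, hjs⟩, hvj⟩
  rw [← card_neighborFinset_eq_degree]
  refine (card_le_card hsub).trans_eq ?_
  rw [h.card_biUnion_B hb fun j hj => by grind, Nat.card_Icc]
  grind

theorem le_conn (hb : ∀ j < s, #(B j) = 1) : s - 1 ≤ G.conn := by
  refine le_conn_of_hubs ((Icc 1 (s - 1)).biUnion B) ?_ fun v hv => ?_
  · rw [h.card_biUnion_B hb fun j hj => by grind, Nat.card_Icc]
    omega
  · obtain ⟨j, hj, hvj⟩ := mem_biUnion.1 hv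
    exact h.exists_common_neighbors hb (mem_Icc.1 hj).1 (mem_Icc.1 hj).2 hvj

theorem not_hamiltonianConnected (hb : ∀ j < s, #(B j) = 1) : ¬G.HamiltonianConnected := by
  have hs := h.two_le
  have hbb := h.bb_mem_B_zero
  have hcard : Fintype.card V =
      #(insert x ((range s).biUnion B)) + #((range (s + 1)).image A) := by
    rw [← h.compl_cut, card_compl]
    have := card_le_univ (insert x ((range s).biUnion B))
    omega
  refine not_hamiltonianConnected_of_isIndepSet h.isIndepSet_image_A (u := x) (v := bb)
    (fun e => h.x_notMem_B (j := 0) (by omega) (by rwa [e])) ?_ ?_ ?_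
  · intro hx
    obtain ⟨i, hi, hix⟩ := mem_image.1 hx
    exact h.A_ne_x (by grind) hix
  · intro hbbA
    obtain ⟨i, hi, rfl⟩ := mem_image.1 hbbA
    exact h.A_notMem_B (by grind) (by omega) hbb
  · rw [hcard, h.card_cut hb, h.card_image_A_range]
    omega

end G1Witness

end SimpleGraph

theorem stmt_19_general {V : Type*} [Fintype V] [DecidableEq V]
    (G : SimpleGraph V) [DecidableRel G.Adj]
    (s : ℕ) (A : ℕ → V) (B : ℕ → Finset V) (x bb : V)
    (h : G.G1Witness s A B x bb)
    (hs : 4 ≤ s) (hb : ∀ j < s, (B j).card = 1) :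
    G.conn = G.minDegree ∧ 3 ≤ G.conn ∧ ¬G.HamiltonianConnected ∧
      G.IsVertexCut (insert x ((Finset.range s).biUnion B)) ∧
      (insert x ((Finset.range s).biUnion B)).card = s + 1 ∧
      Nat.card ((G.induce
          ((↑(insert x ((Finset.range s).biUnion B)) : Set V)ᶜ)).ConnectedComponent)
        = (insert x ((Finset.range s).biUnion B)).card := by
  have hconn_ge : s - 1 ≤ G.conn := h.le_conn hb
  have hconn_le : G.conn ≤ G.minDegree :=
    conn_le_minDegree (h.A_ne_A le_rfl (Nat.zero_le s) (by omega)) (h.not_adj_A_A le_rfl s.zero_le)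
  have hdeg : G.minDegree ≤ s - 1 := (G.minDegree_le_degree _).trans (h.degree_A_s_le hb)
  refine ⟨by omega, by omega, h.not_hamiltonianConnected hb, h.isVertexCut_cut, h.card_cut hb, ?_⟩
  rw [h.isIndepSet_compl_cut.card_connectedComponent_induce, h.coe_compl_cut,
    Set.ncard_coe_finset, h.card_image_A_range, h.card_cut hb]

theorem stmt_19 {V : Type*} [Fintype V] [Nonempty V] [DecidableEq V]
    (G : SimpleGraph V) [DecidableRel G.Adj]
    (s : ℕ) (A : ℕ → V) (B : ℕ → Finset V) (x bb : V)
    (h : G.G1Witness s A B x bb)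
    (hs : 4 ≤ s) (hb : ∀ j < s, (B j).card = 1) :
    G.conn = G.minDegree ∧ 3 ≤ G.conn ∧ ¬G.HamiltonianConnected ∧
      G.IsVertexCut (insert x ((Finset.range s).biUnion B)) ∧
      (insert x ((Finset.range s).biUnion B)).card = s + 1 ∧
      Nat.card ((G.induce
          ((↑(insert x ((Finset.range s).biUnion B)) : Set V)ᶜ)).ConnectedComponent)
        = (insert x ((Finset.range s).biUnion B)).card :=
  stmt_19_general G s A B x bb h hs hb
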